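/- Let f be a non-negative, monotone, γ-meta-submodular set function, M = ([n], I) a matroid of rank r, T ∈ I an optimum (f-maximizing) independent set, and S ∈ I a base that is a (1 + ε/n²)-approximate local optimum, i.e., (1 + ε/n²)·f(S) ≥ f(S − i + j) for all i ∈ S, j ∉ S with S − i + j ∈ I. Then f(T) ≤ [ ((2γ + r − 1)/(r − 1))·2^{4γ}·(5γ + 2) + 1 + 2^{4γ}·(ε(γ+r−1)r)/((r−1)n) ]·f(S). In particular f(T) ≤ O(γ²·2^{4γ})·f(S). -/

import Mathlib

open Finset

/-- First-order difference `B_i(S)`. -/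
def Bdiff {n : ℕ} (f : Finset (Fin n) → ℝ) (i : Fin n) (S : Finset (Fin n)) : ℝ :=
  f (insert i S) - f (S.erase i)

/-- Second-order difference `A_{ij}(S)`. -/
def Adiff {n : ℕ} (f : Finset (Fin n) → ℝ) (i j : Fin n) (S : Finset (Fin n)) : ℝ :=
  f (insert j (insert i S)) - f ((insert i S).erase j)
    - f (insert j (S.erase i)) + f ((S.erase i).erase j)

noncomputable def Eprod (γ : ℝ) : ℕ → ℕ → ℝ
  | 0, _ => 1
  | (k+1), m => (1 + 2*γ/m) * Eprod γ k (m+1)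

open Classical in
noncomputable def rk {n : ℕ} (Indep : Finset (Fin n) → Prop) (X : Finset (Fin n)) : ℕ :=
  (X.powerset.filter Indep).sup Finset.card

open Classical in
noncomputable def Vex {n : ℕ} (Indep : Finset (Fin n) → Prop) (S : Finset (Fin n))
    (j : Fin n) : Finset (Fin n) :=
  S.filter (fun i => Indep (insert j (S.erase i)))

lemma Eprod_ge_one {γ : ℝ} (hγ : 0 ≤ γ) : ∀ k m : ℕ, 1 ≤ Eprod γ k m := by
  intro k
  induction k with
  | zero => intro m; simp [Eprod]
  | succ k ih =>
    intro m
    have h1 : (0:ℝ) ≤ 2*γ/m := by positivity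
    have := ih (m+1)
    simp only [Eprod]
    nlinarith

lemma Eprod_le_exp {γ : ℝ} (hγ : 0 ≤ γ) :
    ∀ k m : ℕ, 1 ≤ m → Eprod γ k m ≤ Real.exp (2*γ*k/m) := by
  intro k
  induction k with
  | zero => intro m hm; simp [Eprod]
  | succ k ih =>
    intro m hm
    have hm0 : (0:ℝ) < m := by exact_mod_cast hm
    have h1 : (1 + 2*γ/m) ≤ Real.exp (2*γ/m) := by
      have := Real.add_one_le_exp (2*γ/m); linarith
    have h2 : Eprod γ k (m+1) ≤ Real.exp (2*γ*k/(m+1)) := by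
      have := ih (m+1) (by omega); exact_mod_cast this
    have h3 : Real.exp (2*γ*k/(m+1)) ≤ Real.exp (2*γ*k/m) := by
      apply Real.exp_le_exp.mpr
      apply div_le_div_of_nonneg_left (by positivity) hm0
      push_cast; linarith
    have h4 : (0:ℝ) ≤ 1 + 2*γ/m := by positivity
    calc Eprod γ (k+1) m = (1 + 2*γ/m) * Eprod γ k (m+1) := rfl
      _ ≤ Real.exp (2*γ/m) * Real.exp (2*γ*k/m) := by
          apply mul_le_mul h1 (h2.trans h3) (le_trans zero_le_one (Eprod_ge_one hγ k (m+1))) (Real.exp_nonneg _)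
      _ = Real.exp (2*γ/m + 2*γ*k/m) := (Real.exp_add _ _).symm
      _ = Real.exp (2*γ*((k:ℝ)+1)/m) := by rw [show 2*γ/(m:ℝ) + 2*γ*k/m = 2*γ*((k:ℝ)+1)/m by ring]
      _ = Real.exp (2*γ*((k+1:ℕ):ℝ)/m) := by push_cast; ring_nf

lemma Eprod_le_rpow {γ : ℝ} (hγ : 0 ≤ γ) {k m : ℕ} (hm : 1 ≤ m) (hk : k ≤ m) :
    Eprod γ k m ≤ (2:ℝ) ^ (4*γ) := by
  have h1 := Eprod_le_exp hγ k m hm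
  have hm0 : (0:ℝ) < m := by exact_mod_cast hm
  have h2 : 2*γ*k/m ≤ 2*γ := by
    rw [div_le_iff₀ hm0]
    have : (k:ℝ) ≤ m := by exact_mod_cast hk
    nlinarith
  have h3 : (2:ℝ) ^ (4*γ) = Real.exp (Real.log 2 * (4*γ)) := Real.rpow_def_of_pos (by norm_num) _
  have h4 : 2*γ ≤ Real.log 2 * (4*γ) := by
    have := Real.log_two_gt_d9
    nlinarith
  calc Eprod γ k m ≤ Real.exp (2*γ*k/m) := h1
    _ ≤ Real.exp (Real.log 2 * (4*γ)) := Real.exp_le_exp.mpr (h2.trans h4)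
    _ = (2:ℝ) ^ (4*γ) := h3.symm


section Lem
variable {n : ℕ} {f : Finset (Fin n) → ℝ} {γ : ℝ}

lemma Bdiff_nonneg (hmono : ∀ S T : Finset (Fin n), S ⊆ T → f S ≤ f T)
    (i : Fin n) (S : Finset (Fin n)) : 0 ≤ Bdiff f i S := by
  have := hmono (S.erase i) (insert i S) ((erase_subset _ _).trans (subset_insert _ _))
  simp only [Bdiff]; linarith

lemma Adiff_eq (f : Finset (Fin n) → ℝ) (i j : Fin n) (S : Finset (Fin n)) :
    Adiff f i j S = Bdiff f j (insert i S) - Bdiff f j (S.erase i) := by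
  simp only [Adiff, Bdiff]; ring

lemma lemA (hγ : 0 ≤ γ)
    (hms : ∀ S : Finset (Fin n), S.Nonempty → ∀ i j : Fin n,
      (S.card : ℝ) * Adiff f i j S ≤ γ * (Bdiff f i S + Bdiff f j S))
    {R : Finset (Fin n)} (hR : R.Nonempty) {i : Fin n} (hi : i ∉ R) (j : Fin n) :
    Bdiff f j (insert i R) ≤ Bdiff f j R + γ / R.card * (Bdiff f i R + Bdiff f j R) := by
  have h := hms R hR i j
  rw [Adiff_eq, erase_eq_of_notMem hi] at h
  have hc : (0:ℝ) < R.card := by exact_mod_cast card_pos.mpr hR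
  have h2 : Bdiff f j (insert i R) - Bdiff f j R ≤ γ * (Bdiff f i R + Bdiff f j R) / R.card := by
    rw [le_div_iff₀ hc]; nlinarith
  rw [div_mul_eq_mul_div]
  linarith [h2]

lemma lemC (hγ : 0 ≤ γ) (hnonneg : ∀ S : Finset (Fin n), 0 ≤ f S)
    (hmono : ∀ S T : Finset (Fin n), S ⊆ T → f S ≤ f T)
    (hms : ∀ S : Finset (Fin n), S.Nonempty → ∀ i j : Fin n,
      (S.card : ℝ) * Adiff f i j S ≤ γ * (Bdiff f i S + Bdiff f j S))
    (R : Finset (Fin n)) : ∑ i ∈ R, Bdiff f i R ≤ (2*γ+1) * f R := by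
  induction R using Finset.strongInduction with
  | _ R IH =>
    rcases R.eq_empty_or_nonempty with rfl | hR
    · simp only [sum_empty]
      nlinarith [hnonneg (∅ : Finset (Fin n))]
    · set m : ℝ := (R.card : ℝ) with hm
      have hm1 : (1:ℝ) ≤ m := by
        have h : 1 ≤ R.card := card_pos.mpr hR
        rw [hm]; exact_mod_cast h
      have hm0 : (0:ℝ) < m := by linarith
      set Sd : ℝ := ∑ i ∈ R, Bdiff f i R with hSd
      have hSd0 : 0 ≤ Sd := sum_nonneg fun i _ => Bdiff_nonneg hmono i R
      -- pairwise inequality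
      have pair : ∀ i ∈ R, ∀ j ∈ R.erase i,
          Bdiff f j R ≤ Bdiff f j (R.erase i) + γ/m * (Bdiff f i R + Bdiff f j R) := by
        intro i hi j hj
        have h := hms R hR i j
        rw [Adiff_eq, insert_eq_self.mpr hi] at h
        have h2 : Bdiff f j R - Bdiff f j (R.erase i) ≤ γ * (Bdiff f i R + Bdiff f j R) / m := by
          rw [le_div_iff₀ hm0]; nlinarith
        rw [div_mul_eq_mul_div]; linarith
      -- sum it
      have sum1 : ∑ i ∈ R, ∑ j ∈ R.erase i, Bdiff f j R = (m - 1) * Sd := by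
        have : ∀ i ∈ R, ∑ j ∈ R.erase i, Bdiff f j R = Sd - Bdiff f i R := by
          intro i hi; rw [sum_erase_eq_sub hi]
        rw [sum_congr rfl this, sum_sub_distrib, sum_const, hSd]
        push_cast; ring
      have sum2 : ∑ i ∈ R, ∑ j ∈ R.erase i, Bdiff f j (R.erase i) ≤ (2*γ+1) * (m * f R - Sd) := by
        have step : ∀ i ∈ R, ∑ j ∈ R.erase i, Bdiff f j (R.erase i) ≤ (2*γ+1) * f (R.erase i) := by
          intro i hi; exact IH (R.erase i) (erase_ssubset hi)
        calc ∑ i ∈ R, ∑ j ∈ R.erase i, Bdiff f j (R.erase i)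
            ≤ ∑ i ∈ R, (2*γ+1) * f (R.erase i) := sum_le_sum step
          _ = (2*γ+1) * ∑ i ∈ R, f (R.erase i) := by rw [mul_sum]
          _ = (2*γ+1) * (m * f R - Sd) := by
              congr 1
              have : ∀ i ∈ R, f (R.erase i) = f R - Bdiff f i R := by
                intro i hi
                simp only [Bdiff, insert_eq_self.mpr hi]; ring
              rw [sum_congr rfl this, sum_sub_distrib, sum_const, hSd]
              push_cast; ring
      have sum3 : ∑ i ∈ R, ∑ j ∈ R.erase i, γ/m * (Bdiff f i R + Bdiff f j R)
          = γ/m * (2 * (m-1) * Sd) := by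
        have : ∀ i ∈ R, ∑ j ∈ R.erase i, γ/m * (Bdiff f i R + Bdiff f j R)
            = γ/m * ((m-1) * Bdiff f i R + (Sd - Bdiff f i R)) := by
          intro i hi
          have h1 : 1 ≤ R.card := card_pos.mpr hR
          rw [← mul_sum, sum_add_distrib, sum_const, sum_erase_eq_sub hi, card_erase_of_mem hi,
            hSd, nsmul_eq_mul, Nat.cast_sub h1, hm]
          push_cast
          ring
        rw [sum_congr rfl this, ← mul_sum]
        congr 1
        rw [sum_add_distrib, ← mul_sum, sum_sub_distrib, sum_const, hSd]
        push_cast; ring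
      have main : (m-1) * Sd ≤ (2*γ+1) * (m * f R - Sd) + γ/m * (2*(m-1)*Sd) := by
        rw [← sum1, ← sum3]
        calc ∑ i ∈ R, ∑ j ∈ R.erase i, Bdiff f j R
            ≤ ∑ i ∈ R, ∑ j ∈ R.erase i,
                (Bdiff f j (R.erase i) + γ/m * (Bdiff f i R + Bdiff f j R)) := by
              apply sum_le_sum; intro i hi; apply sum_le_sum; intro j hj
              exact pair i hi j hj
          _ = (∑ i ∈ R, ∑ j ∈ R.erase i, Bdiff f j (R.erase i))
              + ∑ i ∈ R, ∑ j ∈ R.erase i, γ/m * (Bdiff f i R + Bdiff f j R) := by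
              rw [← sum_add_distrib]; congr 1; ext i; rw [← sum_add_distrib]
          _ ≤ _ := by linarith [sum2]
      -- conclude
      have hfrac : γ/m * (2*(m-1)*Sd) ≤ 2*γ*Sd := by
        rw [div_mul_eq_mul_div, div_le_iff₀ hm0]
        nlinarith
      have hfin : m * Sd ≤ m * ((2*γ+1) * f R) := by nlinarith
      exact (mul_le_mul_iff_right₀ hm0).mp hfin

lemma lemD (hγ : 0 ≤ γ)
    (hmono : ∀ S T : Finset (Fin n), S ⊆ T → f S ≤ f T)
    (hms : ∀ S : Finset (Fin n), S.Nonempty → ∀ i j : Fin n,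
      (S.card : ℝ) * Adiff f i j S ≤ γ * (Bdiff f i S + Bdiff f j S)) :
    ∀ k : ℕ, ∀ U R : Finset (Fin n), U.card = k → Disjoint U R → R.Nonempty →
      f (R ∪ U) ≤ f R + Eprod γ k R.card * ∑ j ∈ U, Bdiff f j R := by
  intro k
  induction k with
  | zero =>
    intro U R hU _ _
    rw [card_eq_zero.mp hU]
    simp [Eprod]
  | succ k IH =>
    intro U R hU hdis hR
    have hUne : U.Nonempty := card_pos.mp (by omega)
    obtain ⟨t, ht, hmin⟩ := exists_min_image U (fun j => Bdiff f j R) hUne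
    have htR : t ∉ R := disjoint_left.mp hdis ht
    have hm0 : (0:ℝ) < R.card := by exact_mod_cast card_pos.mpr hR
    set m : ℝ := (R.card : ℝ) with hm
    set Φ : ℝ := ∑ j ∈ U, Bdiff f j R with hΦ
    have hBt : 0 ≤ Bdiff f t R := Bdiff_nonneg hmono t R
    have hΦ0 : 0 ≤ Φ := sum_nonneg fun j _ => Bdiff_nonneg hmono j R
    have hkBt : ((k:ℝ)+1) * Bdiff f t R ≤ Φ := by
      have : ∑ j ∈ U, Bdiff f t R ≤ Φ := sum_le_sum fun j hj => hmin j hj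
      rw [sum_const, hU, nsmul_eq_mul] at this
      push_cast at this
      linarith
    -- key sum bound after inserting t
    have key : ∑ j ∈ U.erase t, Bdiff f j (insert t R)
        ≤ Φ - Bdiff f t R + 2*γ/m * Φ := by
      have step : ∀ j ∈ U.erase t, Bdiff f j (insert t R)
          ≤ Bdiff f j R + γ/m * (Bdiff f t R + Bdiff f j R) :=
        fun j _ => lemA hγ hms hR htR j
      have hsum : ∑ j ∈ U.erase t, Bdiff f j (insert t R)
          ≤ ∑ j ∈ U.erase t, (Bdiff f j R + γ/m * (Bdiff f t R + Bdiff f j R)) :=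
        sum_le_sum step
      have hexp : ∑ j ∈ U.erase t, (Bdiff f j R + γ/m * (Bdiff f t R + Bdiff f j R))
          = (Φ - Bdiff f t R) + γ/m * ((k:ℝ) * Bdiff f t R + (Φ - Bdiff f t R)) := by
        rw [sum_add_distrib, sum_erase_eq_sub ht, ← mul_sum, sum_add_distrib, sum_const,
          sum_erase_eq_sub ht, card_erase_of_mem ht, hU, nsmul_eq_mul]
        try push_cast
        try rw [hΦ]
        try ring_nf
      have hγm : 0 ≤ γ/m := by positivity
      have h1 : (k:ℝ) * Bdiff f t R ≤ Φ - Bdiff f t R := by linarith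
      have h2 : γ/m * ((k:ℝ) * Bdiff f t R + (Φ - Bdiff f t R)) ≤ γ/m * (2*Φ) := by
        apply mul_le_mul_of_nonneg_left _ hγm
        linarith
      calc ∑ j ∈ U.erase t, Bdiff f j (insert t R)
          ≤ (Φ - Bdiff f t R) + γ/m * ((k:ℝ) * Bdiff f t R + (Φ - Bdiff f t R)) := by
            rw [← hexp]; exact hsum
        _ ≤ Φ - Bdiff f t R + 2*γ/m * Φ := by
            have : γ/m*(2*Φ) = 2*γ/m*Φ := by ring
            linarith [h2, this ▸ h2]
    -- apply IH
    have hcard' : (insert t R).card = R.card + 1 := card_insert_of_notMem htR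
    have hIH := IH (U.erase t) (insert t R)
      (by simp [card_erase_of_mem ht, hU])
      (by
        rw [disjoint_insert_right]
        exact ⟨notMem_erase t U, disjoint_of_subset_left (erase_subset t U) hdis⟩)
      (insert_nonempty t R)
    rw [hcard'] at hIH
    have hunion : R ∪ U = insert t R ∪ U.erase t := by
      ext x
      by_cases hx : x = t <;>
        simp only [mem_union, mem_insert, mem_erase, hx] <;> tauto
    have hE1 : 1 ≤ Eprod γ k (R.card+1) := Eprod_ge_one hγ _ _
    have hE0 : 0 ≤ Eprod γ k (R.card+1) := by linarith
    have hins : f (insert t R) = f R + Bdiff f t R := by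
      simp only [Bdiff, erase_eq_of_notMem htR]; ring
    have hEdef : Eprod γ (k+1) R.card = (1 + 2*γ/(R.card:ℝ)) * Eprod γ k (R.card+1) := rfl
    have hmul : Eprod γ k (R.card+1) * ∑ j ∈ U.erase t, Bdiff f j (insert t R)
        ≤ Eprod γ k (R.card+1) * (Φ - Bdiff f t R + 2*γ/m * Φ) :=
      mul_le_mul_of_nonneg_left key hE0
    rw [hunion]
    calc f (insert t R ∪ U.erase t)
        ≤ f (insert t R) + Eprod γ k (R.card+1) * ∑ j ∈ U.erase t, Bdiff f j (insert t R) := hIH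
      _ ≤ f R + Bdiff f t R + Eprod γ k (R.card+1) * (Φ - Bdiff f t R + 2*γ/m * Φ) := by
          rw [hins]; linarith
      _ ≤ f R + Eprod γ (k+1) R.card * Φ := by
          rw [hEdef]
          have hprod : Bdiff f t R * 1 ≤ Bdiff f t R * Eprod γ k (R.card+1) :=
            mul_le_mul_of_nonneg_left hE1 hBt
          rw [← hm]
          ring_nf
          ring_nf at hprod ⊢
          nlinarith [hprod]

end Lem


section Rk
open Classical
variable {n : ℕ} {Indep : Finset (Fin n) → Prop}

lemma card_le_rk {I X : Finset (Fin n)} (hIX : I ⊆ X) (hind : Indep I) :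
    I.card ≤ rk Indep X :=
  le_sup (by simp [mem_filter, mem_powerset, hIX, hind])

lemma rk_le_card (X : Finset (Fin n)) : rk Indep X ≤ X.card := by
  apply Finset.sup_le
  intro I hI
  rw [mem_filter, mem_powerset] at hI
  exact card_le_card hI.1

lemma exists_rk_set (hempty : Indep ∅) (X : Finset (Fin n)) :
    ∃ I, I ⊆ X ∧ Indep I ∧ I.card = rk Indep X := by
  obtain ⟨I, hI, hEq⟩ := Finset.exists_mem_eq_sup (X.powerset.filter Indep)
    ⟨∅, by simp [hempty]⟩ Finset.card
  rw [mem_filter, mem_powerset] at hI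
  exact ⟨I, hI.1, hI.2, hEq.symm⟩

lemma rk_mono {X Y : Finset (Fin n)} (h : X ⊆ Y) : rk Indep X ≤ rk Indep Y := by
  classical
  apply Finset.sup_mono
  apply filter_subset_filter
  exact powerset_mono.mpr h

lemma exists_extend (hempty : Indep ∅)
    (hexch : ∀ X Y : Finset (Fin n), Indep X → Indep Y → X.card < Y.card →
      ∃ i ∈ Y \ X, Indep (insert i X)) (X : Finset (Fin n)) :
    ∀ d (I : Finset (Fin n)), rk Indep X - I.card ≤ d → I ⊆ X → Indep I →
      ∃ J, I ⊆ J ∧ J ⊆ X ∧ Indep J ∧ J.card = rk Indep X := by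
  intro d
  induction d with
  | zero =>
    intro I hd hIX hind
    refine ⟨I, subset_refl I, hIX, hind, ?_⟩
    have := card_le_rk hIX hind
    omega
  | succ d IHd =>
    intro I hd hIX hind
    by_cases hc : I.card = rk Indep X
    · exact ⟨I, subset_refl I, hIX, hind, hc⟩
    · have hlt : I.card < rk Indep X := lt_of_le_of_ne (card_le_rk hIX hind) hc
      obtain ⟨K, hKX, hKind, hKcard⟩ := exists_rk_set hempty X
      obtain ⟨e, he, hins⟩ := hexch I K hind hKind (by omega)
      rw [mem_sdiff] at he
      have : (insert e I).card = I.card + 1 := card_insert_of_notMem he.2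
      obtain ⟨J, hJ1, hJ2, hJ3, hJ4⟩ := IHd (insert e I) (by omega)
        (insert_subset (hKX he.1) hIX) hins
      exact ⟨J, (subset_insert e I).trans hJ1, hJ2, hJ3, hJ4⟩

lemma exists_base_ext
    (hexch : ∀ X Y : Finset (Fin n), Indep X → Indep Y → X.card < Y.card →
      ∃ i ∈ Y \ X, Indep (insert i X))
    {S : Finset (Fin n)} (hSind : Indep S)
    (hSmax : ∀ R : Finset (Fin n), Indep R → R.card ≤ S.card) :
    ∀ d (I : Finset (Fin n)), S.card - I.card ≤ d → Indep I →
      ∃ B, I ⊆ B ∧ B ⊆ I ∪ S ∧ Indep B ∧ B.card = S.card := by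
  intro d
  induction d with
  | zero =>
    intro I hd hind
    have := hSmax I hind
    refine ⟨I, subset_refl I, subset_union_left, hind, by omega⟩
  | succ d IHd =>
    intro I hd hind
    by_cases hc : I.card = S.card
    · exact ⟨I, subset_refl I, subset_union_left, hind, hc⟩
    · have hlt : I.card < S.card := lt_of_le_of_ne (hSmax I hind) hc
      obtain ⟨e, he, hins⟩ := hexch I S hind hSind hlt
      rw [mem_sdiff] at he
      have hcard : (insert e I).card = I.card + 1 := card_insert_of_notMem he.2
      obtain ⟨B, hB1, hB2, hB3, hB4⟩ := IHd (insert e I) (by omega) hins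
      refine ⟨B, (subset_insert e I).trans hB1, ?_, hB3, hB4⟩
      intro x hx
      rcases mem_union.mp (hB2 hx) with hx' | hx'
      · rcases mem_insert.mp hx' with rfl | hx'' 
        · exact mem_union_right _ he.1
        · exact mem_union_left _ hx''
      · exact mem_union_right _ hx'

lemma rk_insert_mono (hempty : Indep ∅)
    (hhered : ∀ X Y : Finset (Fin n), X ⊆ Y → Indep Y → Indep X)
    (hexch : ∀ X Y : Finset (Fin n), Indep X → Indep Y → X.card < Y.card →
      ∃ i ∈ Y \ X, Indep (insert i X))
    {X Y : Finset (Fin n)} {j : Fin n} (hXY : X ⊆ Y) (hjY : j ∉ Y)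
    (hX : rk Indep (insert j X) = rk Indep X) :
    rk Indep (insert j Y) = rk Indep Y := by
  by_contra hne
  have hlt : rk Indep Y < rk Indep (insert j Y) :=
    lt_of_le_of_ne (rk_mono (subset_insert j Y)) (Ne.symm hne)
  obtain ⟨I, hIX, hIind, hIcard⟩ := exists_rk_set hempty X
  obtain ⟨J, hIJ, hJY, hJind, hJcard⟩ :=
    exists_extend hempty hexch Y (rk Indep Y - I.card) I le_rfl (hIX.trans hXY) hIind
  obtain ⟨K, hKins, hKind, hKcard⟩ := exists_rk_set hempty (insert j Y)
  obtain ⟨e, he, heins⟩ := hexch J K hJind hKind (by omega)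
  rw [mem_sdiff] at he
  have heY : e = j ∨ e ∈ Y := by
    rcases mem_insert.mp (hKins he.1) with h | h
    · exact Or.inl h
    · exact Or.inr h
  rcases heY with rfl | heY
  · -- e = j : insert j J indep, so insert j I indep, contradiction with rk (insert j X) = rk X
    have hIe : Indep (insert e I) := hhered _ _ (insert_subset_insert e hIJ) heins
    have hsub : insert e I ⊆ insert e X := insert_subset_insert e hIX
    have hcard : (insert e I).card = I.card + 1 := by
      apply card_insert_of_notMem
      intro h
      exact hjY (hXY (hIX h))
    have := card_le_rk hsub hIe
    omega
  · -- e ∈ Y : insert e J ⊆ Y indep with card > rk Y, contradiction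
    have hsub : insert e J ⊆ Y := insert_subset heY hJY
    have hcard : (insert e J).card = J.card + 1 := card_insert_of_notMem he.2
    have := card_le_rk hsub heins
    omega

lemma rk_union (hempty : Indep ∅)
    (hhered : ∀ X Y : Finset (Fin n), X ⊆ Y → Indep Y → Indep X)
    (hexch : ∀ X Y : Finset (Fin n), Indep X → Indep Y → X.card < Y.card →
      ∃ i ∈ Y \ X, Indep (insert i X))
    {N : Finset (Fin n)} :
    ∀ A : Finset (Fin n), (∀ j ∈ A, j ∉ N ∧ rk Indep (insert j N) = rk Indep N) →
      rk Indep (N ∪ A) = rk Indep N := by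
  intro A
  induction A using Finset.induction with
  | empty => simp
  | @insert j A' hj IH =>
    intro hA
    rw [union_insert]
    have hj' := hA j (mem_insert_self j A')
    have hIH := IH (fun x hx => hA x (mem_insert_of_mem hx))
    have : rk Indep (insert j (N ∪ A')) = rk Indep (N ∪ A') := by
      apply rk_insert_mono hempty hhered hexch subset_union_left _ hj'.2
      rw [mem_union]
      push_neg
      refine ⟨hj'.1, hj⟩
    rw [this, hIH]


variable (hempty : Indep ∅)
    (hhered : ∀ X Y : Finset (Fin n), X ⊆ Y → Indep Y → Indep X)
    (hexch : ∀ X Y : Finset (Fin n), Indep X → Indep Y → X.card < Y.card →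
      ∃ i ∈ Y \ X, Indep (insert i X))
    {S T : Finset (Fin n)} (hSind : Indep S)
    (hSmax : ∀ R : Finset (Fin n), Indep R → R.card ≤ S.card)
    (hTind : Indep T)
include hempty hhered hexch hSind hSmax

lemma rk_insert_V {j : Fin n} (hjS : j ∉ S) :
    rk Indep (insert j (Vex Indep S j)) = rk Indep (Vex Indep S j) := by
  classical
  set V := Vex Indep S j with hV
  have hVS : V ⊆ S := filter_subset _ _
  by_contra hne
  have hlt : rk Indep V < rk Indep (insert j V) :=
    lt_of_le_of_ne (rk_mono (subset_insert j V)) (Ne.symm hne)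
  obtain ⟨K, hKins, hKind, hKcard⟩ := exists_rk_set hempty (insert j V)
  have hjK : j ∈ K := by
    by_contra hjK
    rw [subset_insert_iff_of_notMem hjK] at hKins
    have := card_le_rk hKins hKind
    omega
  obtain ⟨B, hKB, hBsub, hBind, hBcard⟩ :=
    exists_base_ext hexch hSind hSmax S.card K (Nat.sub_le _ _) hKind
  have hBjS : B ⊆ insert j S := by
    intro x hx
    rcases mem_union.mp (hBsub hx) with h | h
    · rcases mem_insert.mp (hKins h) with rfl | h2
      · exact mem_insert_self _ _
      · exact mem_insert_of_mem (hVS h2)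
    · exact mem_insert_of_mem h
  have hjB : j ∈ B := hKB hjK
  have hBej : B.erase j ⊆ S := by
    intro x hx
    rw [mem_erase] at hx
    rcases mem_insert.mp (hBjS hx.2) with h | h
    · exact absurd h hx.1
    · exact h
  have hSpos : 1 ≤ S.card := by
    rcases S.eq_empty_or_nonempty with rfl | h
    · exfalso
      have hB0 : B = ∅ := card_eq_zero.mp (by simpa using hBcard)
      exact absurd (hB0 ▸ hjB) (notMem_empty j)
    · exact card_pos.mpr h
  have hBejcard : (B.erase j).card = S.card - 1 := by
    rw [card_erase_of_mem hjB, hBcard]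
  have hnotsub : ¬ S ⊆ B.erase j := by
    intro h
    have := card_le_card h
    omega
  obtain ⟨i, hiS, hiB⟩ := not_subset.mp hnotsub
  have hij : i ≠ j := fun h => hjS (h ▸ hiS)
  have hiB' : i ∉ B := by
    intro h
    exact hiB (mem_erase.mpr ⟨hij, h⟩)
  have heq : B.erase j = S.erase i := by
    apply eq_of_subset_of_card_le
    · intro x hx
      rw [mem_erase]
      exact ⟨fun hxi => hiB (hxi ▸ hx), hBej hx⟩
    · rw [card_erase_of_mem hiS, hBejcard]
  have hswap : Indep (insert j (S.erase i)) := by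
    rw [← heq, insert_erase hjB]
    exact hBind
  have hiV : i ∈ V := by
    rw [hV, Vex, mem_filter]
    exact ⟨hiS, hswap⟩
  -- contradiction via insert i (K.erase j)
  have hKej : K.erase j ⊆ V := by
    intro x hx
    rw [mem_erase] at hx
    rcases mem_insert.mp (hKins hx.2) with h | h
    · exact absurd h hx.1
    · exact h
  have hLV : insert i (K.erase j) ⊆ V := insert_subset hiV hKej
  have hLind : Indep (insert i (K.erase j)) := by
    apply hhered _ S _ hSind
    exact insert_subset hiS (hKej.trans hVS)
  have hiK : i ∉ K.erase j := fun h => hiB' (hKB (erase_subset _ _ h))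
  have hLcard : (insert i (K.erase j)).card = K.card := by
    rw [card_insert_of_notMem hiK, card_erase_of_mem hjK]
    have : 1 ≤ K.card := card_pos.mpr ⟨j, hjK⟩
    omega
  have := card_le_rk hLV hLind
  omega


include hTind

lemma hall_cond (A : Finset (Fin n)) (hA : A ⊆ T \ S) :
    A.card ≤ (A.biUnion (Vex Indep S)).card := by
  classical
  set N := A.biUnion (Vex Indep S) with hN
  have hNS : N ⊆ S := by
    intro x hx
    rw [hN, mem_biUnion] at hx
    obtain ⟨j, _, hj⟩ := hx
    exact (filter_subset _ _) hj
  have hjprop : ∀ j ∈ A, j ∉ N ∧ rk Indep (insert j N) = rk Indep N := by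
    intro j hj
    have hjS : j ∉ S := (mem_sdiff.mp (hA hj)).2
    have hjN : j ∉ N := fun h => hjS (hNS h)
    refine ⟨hjN, ?_⟩
    apply rk_insert_mono hempty hhered hexch (subset_biUnion_of_mem _ hj) hjN
    exact rk_insert_V hempty hhered hexch hSind hSmax hjS
  have h1 : rk Indep (N ∪ A) = rk Indep N := rk_union hempty hhered hexch A hjprop
  have h2 : A.card ≤ rk Indep (N ∪ A) := by
    apply card_le_rk subset_union_right
    exact hhered A T (hA.trans sdiff_subset) hTind
  have h3 : rk Indep N ≤ N.card := rk_le_card N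
  omega

lemma exists_swap_injection :
    ∃ g : {x // x ∈ T \ S} → Fin n, Function.Injective g ∧
      ∀ j : {x // x ∈ T \ S}, g j ∈ S ∧ Indep (insert j.1 (S.erase (g j))) := by
  classical
  have hall := (Finset.all_card_le_biUnion_card_iff_exists_injective
    (fun j : {x // x ∈ T \ S} => Vex Indep S j.1)).mp ?_
  · obtain ⟨g, hginj, hg⟩ := hall
    refine ⟨g, hginj, fun j => ?_⟩
    have := hg j
    rw [Vex, mem_filter] at this
    exact ⟨this.1, this.2⟩
  · intro s
    have himg : s.card = (s.image Subtype.val).card :=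
      (card_image_of_injective s Subtype.val_injective).symm
    have hbi : s.biUnion (fun j => Vex Indep S j.1)
        = (s.image Subtype.val).biUnion (Vex Indep S) := by
      rw [image_biUnion]
    rw [himg, hbi]
    apply hall_cond hempty hhered hexch hSind hSmax hTind
    intro x hx
    rw [mem_image] at hx
    obtain ⟨j, _, rfl⟩ := hx
    exact j.2

end Rk
set_option maxHeartbeats 2000000 in
/-- Local search guarantee for non-negative monotone γ-meta-submodular functions
subject to a matroid constraint: an approximate local optimum base `S` satisfies
`f(T) ≤ [((2γ+r−1)/(r−1))·2^{4γ}·(5γ+2) + 1 + 2^{4γ}·ε(γ+r−1)r/((r−1)n)]·f(S)`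
for an optimum independent set `T`. -/
theorem localSearch_metaSubmodular {n r : ℕ} (γ ε : ℝ) (hγ : 0 ≤ γ) (hε : 0 < ε)
    (hn : 1 ≤ n) (hr : 2 ≤ r)
    (f : Finset (Fin n) → ℝ)
    (hnonneg : ∀ S : Finset (Fin n), 0 ≤ f S) (hf0 : f ∅ = 0)
    (hmono : ∀ S T : Finset (Fin n), S ⊆ T → f S ≤ f T)
    (hms : ∀ S : Finset (Fin n), S.Nonempty → ∀ i j : Fin n,
      (S.card : ℝ) * Adiff f i j S ≤ γ * (Bdiff f i S + Bdiff f j S))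
    (Indep : Finset (Fin n) → Prop)
    (hempty : Indep ∅)
    (hhered : ∀ X Y : Finset (Fin n), X ⊆ Y → Indep Y → Indep X)
    (hexch : ∀ X Y : Finset (Fin n), Indep X → Indep Y → X.card < Y.card →
      ∃ i ∈ Y \ X, Indep (insert i X))
    (S T : Finset (Fin n))
    (hSind : Indep S) (hSmax : ∀ R : Finset (Fin n), Indep R → R.card ≤ S.card)
    (hScard : S.card = r)
    (hTind : Indep T) (hTopt : ∀ R : Finset (Fin n), Indep R → f R ≤ f T)
    (hlocal : ∀ i ∈ S, ∀ j : Fin n, j ∉ S → Indep (insert j (S.erase i)) →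
      f (insert j (S.erase i)) ≤ (1 + ε / (n : ℝ) ^ 2) * f S) :
    f T ≤ ((2 * γ + r - 1) / (r - 1) * (2 : ℝ) ^ (4 * γ) * (5 * γ + 2) + 1
        + (2 : ℝ) ^ (4 * γ) * (ε * (γ + r - 1) * r) / ((r - 1) * n)) * f S := by
  classical
  set U : Finset (Fin n) := T \ S with hU
  -- basic quantities
  have hq1 : (1:ℝ) ≤ (r:ℝ) - 1 := by
    have : (2:ℝ) ≤ (r:ℝ) := by exact_mod_cast hr
    linarith
  have hq0 : (0:ℝ) < (r:ℝ) - 1 := by linarith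
  have hqne : ((r:ℝ) - 1) ≠ 0 := ne_of_gt hq0
  have hN1 : (1:ℝ) ≤ (n:ℝ) := by exact_mod_cast hn
  have hN0 : (0:ℝ) < (n:ℝ) := by linarith
  have hSne : S.Nonempty := card_pos.mp (by omega)
  have hkr : U.card ≤ r := by
    calc U.card ≤ T.card := card_le_card sdiff_subset
      _ ≤ S.card := hSmax T hTind
      _ = r := hScard
  have hkn : U.card ≤ n := by
    have := card_le_card (subset_univ U)
    simpa using this
  have hKr : (U.card : ℝ) ≤ (r:ℝ) := by exact_mod_cast hkr
  have hKn : (U.card : ℝ) ≤ (n:ℝ) := by exact_mod_cast hkn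
  have hK0 : (0:ℝ) ≤ (U.card : ℝ) := by positivity
  set P : ℝ := (2:ℝ) ^ (4*γ) with hP
  have hP0 : (0:ℝ) < P := Real.rpow_pos_of_pos (by norm_num) _
  have hP1 : (1:ℝ) ≤ P := Real.one_le_rpow (by norm_num) (by positivity)
  set q : ℝ := (r:ℝ) - 1 with hqdef
  set c1 : ℝ := ε/(n:ℝ)^2 * (1 + γ/q) with hc1
  set c2 : ℝ := 1 + 2*γ/q with hc2
  have hγq : 0 ≤ γ/q := by positivity
  have hc10 : 0 ≤ c1 := by rw [hc1]; positivity
  have hc20 : 0 ≤ c2 := by rw [hc2]; positivity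
  -- the injection from swaps
  obtain ⟨g, hginj, hg⟩ := exists_swap_injection hempty hhered hexch hSind hSmax hTind
  -- per-element bound
  have per : ∀ j : {x // x ∈ T \ S},
      Bdiff f j.1 S ≤ c1 * f S + c2 * Bdiff f (g j) S := by
    intro j
    obtain ⟨hiS, hsw⟩ := hg j
    obtain ⟨hjT, hjS⟩ := mem_sdiff.mp j.2
    set i : Fin n := g j with hi
    have hij : i ≠ j.1 := fun h => hjS (h ▸ hiS)
    have hRe : (S.erase i).Nonempty := by
      rw [← card_pos, card_erase_of_mem hiS]
      omega
    have hcardRe : ((S.erase i).card : ℝ) = q := by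
      rw [card_erase_of_mem hiS, hScard, hqdef]
      have : 1 ≤ r := by omega
      push_cast [Nat.cast_sub this]
      ring
    have hjRe : j.1 ∉ S.erase i := fun h => hjS (mem_of_mem_erase h)
    have hloc := hlocal i hiS j.1 hjS hsw
    have hA := lemA hγ hms hRe hjRe i
    rw [hcardRe] at hA
    -- identify the four Bdiff values
    have e1 : Bdiff f i (S.erase i) = f S - f (S.erase i) := by
      rw [Bdiff, insert_erase hiS, erase_idem]
    have e2 : Bdiff f j.1 (S.erase i) = f (insert j.1 (S.erase i)) - f (S.erase i) := by
      rw [Bdiff, erase_eq_of_notMem hjRe]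
    have e3 : Bdiff f i (insert j.1 (S.erase i))
        = f (insert j.1 S) - f (insert j.1 (S.erase i)) := by
      rw [Bdiff, Finset.insert_comm, insert_erase hiS, erase_eq_of_notMem]
      intro h
      rcases mem_insert.mp h with h1 | h1
      · exact hij h1
      · exact notMem_erase i S h1
    have e4 : Bdiff f j.1 S = f (insert j.1 S) - f S := by
      rw [Bdiff, erase_eq_of_notMem hjS]
    have e5 : Bdiff f i S = f S - f (S.erase i) := by
      rw [Bdiff, insert_eq_self.mpr hiS]
    have hd0 : 0 ≤ f S - f (S.erase i) := by
      have := hmono (S.erase i) S (erase_subset i S)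
      linarith
    -- combine
    rw [e1, e2, e3] at hA
    -- hA : f(insert j S) - f(swap) ≤ (fS - f(S-i)) + γ/q * ((f(swap) - f(S-i)) + (fS - f(S-i)))
    have hswb : f (insert j.1 (S.erase i)) - f (S.erase i)
        ≤ ε/(n:ℝ)^2 * f S + (f S - f (S.erase i)) := by
      have : (1 + ε/(n:ℝ)^2) * f S = f S + ε/(n:ℝ)^2 * f S := by ring
      linarith [hloc, this ▸ hloc]
    have hmul : γ/q * ((f (insert j.1 (S.erase i)) - f (S.erase i)) + (f S - f (S.erase i)))
        ≤ γ/q * (ε/(n:ℝ)^2 * f S + 2*(f S - f (S.erase i))) := by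
      apply mul_le_mul_of_nonneg_left _ hγq
      linarith
    rw [e4, e5, hc1, hc2]
    have hlocexp : (1+ε/(n:ℝ)^2) * f S = f S + ε/(n:ℝ)^2 * f S := by ring
    have expand2 : ε/(n:ℝ)^2*(1 + γ/q)*f S + (1 + 2*γ/q)*(f S - f (S.erase i))
        = ε/(n:ℝ)^2*f S + (f S - f (S.erase i))
          + γ/q*(ε/(n:ℝ)^2 * f S + 2*(f S - f (S.erase i))) := by ring
    linarith [hA, hmul, hloc, hlocexp, expand2]
  -- sum the per-element bounds
  set Φ : ℝ := ∑ j ∈ U, Bdiff f j S with hΦ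
  have hΦ0 : 0 ≤ Φ := sum_nonneg fun j _ => Bdiff_nonneg hmono j S
  have hΦsum : Φ = ∑ j ∈ U.attach, Bdiff f j.1 S := by
    rw [hΦ]
    exact (sum_attach U fun j => Bdiff f j S).symm
  have hgsum : ∑ j ∈ U.attach, Bdiff f (g j) S ≤ (2*γ+1) * f S := by
    have himg : ∑ j ∈ U.attach, Bdiff f (g j) S
        = ∑ i ∈ U.attach.image g, Bdiff f i S := by
      rw [sum_image]
      intro x _ y _ h
      exact hginj h
    rw [himg]
    calc ∑ i ∈ U.attach.image g, Bdiff f i S ≤ ∑ i ∈ S, Bdiff f i S := by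
          apply sum_le_sum_of_subset_of_nonneg
          · intro x hx
            rw [mem_image] at hx
            obtain ⟨j, _, rfl⟩ := hx
            exact (hg j).1
          · intro i _ _
            exact Bdiff_nonneg hmono i S
      _ ≤ (2*γ+1) * f S := lemC hγ hnonneg hmono hms S
  have hΦb : Φ ≤ ((U.card : ℝ) * c1 + c2 * (2*γ+1)) * f S := by
    rw [hΦsum]
    calc ∑ j ∈ U.attach, Bdiff f j.1 S
        ≤ ∑ j ∈ U.attach, (c1 * f S + c2 * Bdiff f (g j) S) := sum_le_sum fun j _ => per j
      _ = (U.attach.card : ℝ) * (c1 * f S) + c2 * ∑ j ∈ U.attach, Bdiff f (g j) S := by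
          rw [sum_add_distrib, sum_const, nsmul_eq_mul, ← mul_sum]
      _ ≤ (U.card : ℝ) * (c1 * f S) + c2 * ((2*γ+1) * f S) := by
          rw [card_attach]
          have := mul_le_mul_of_nonneg_left hgsum hc20
          linarith
      _ = ((U.card : ℝ) * c1 + c2 * (2*γ+1)) * f S := by ring
  -- build-up bound
  have hTSU : f T ≤ f (S ∪ U) := by
    apply hmono
    intro x hx
    rw [mem_union, hU, mem_sdiff]
    by_cases h : x ∈ S
    · exact Or.inl h
    · exact Or.inr ⟨hx, h⟩
  have hbuild := lemD hγ hmono hms U.card U S rfl sdiff_disjoint hSne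
  have hEP : Eprod γ U.card S.card ≤ P := by
    rw [hP]
    apply Eprod_le_rpow hγ
    · omega
    · omega
  have hEP0 : 0 ≤ Eprod γ U.card S.card := le_trans zero_le_one (Eprod_ge_one hγ _ _)
  have hmain : f T ≤ f S + P * Φ := by
    calc f T ≤ f (S ∪ U) := hTSU
      _ ≤ f S + Eprod γ U.card S.card * Φ := hbuild
      _ ≤ f S + P * Φ := by
          have := mul_le_mul_of_nonneg_right hEP hΦ0
          linarith
  have hPΦ : P * Φ ≤ P * (((U.card : ℝ) * c1 + c2 * (2*γ+1)) * f S) :=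
    mul_le_mul_of_nonneg_left hΦb hP0.le
  -- final coefficient comparison
  have hc2eq : (2*γ + (r:ℝ) - 1) / ((r:ℝ) - 1) = c2 := by
    rw [hc2, hqdef]
    field_simp [show (r:ℝ) - 1 ≠ 0 from hqne]
    ring
  have t1 : P * (c2 * (2*γ+1)) ≤ (2*γ + (r:ℝ) - 1) / ((r:ℝ) - 1) * P * (5*γ+2) := by
    rw [hc2eq]
    nlinarith [mul_nonneg (mul_nonneg hP0.le hc20) hγ, mul_nonneg hP0.le hc20]
  have hfrac : (U.card : ℝ) * c1 ≤ ε * (γ + (r:ℝ) - 1) * (r:ℝ) / (((r:ℝ) - 1) * (n:ℝ)) := by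
    rw [hc1, hqdef]
    have hKc : (U.card:ℝ) * (ε/(n:ℝ)^2 * (1 + γ/((r:ℝ)-1)))
        = (U.card:ℝ) * ε * (((r:ℝ)-1) + γ) / (((r:ℝ)-1) * (n:ℝ)^2) := by
      field_simp [show (r:ℝ) - 1 ≠ 0 from hqne]
    rw [hKc, div_le_div_iff₀ (by positivity) (by positivity)]
    have hKNN : (U.card:ℝ) * (n:ℝ) ≤ (r:ℝ) * (n:ℝ)^2 := by nlinarith
    have hA0 : (0:ℝ) ≤ ε * (((r:ℝ)-1) + γ) * ((r:ℝ)-1) := by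
      apply mul_nonneg (mul_nonneg hε.le (by linarith)) (by linarith)
    have hfin := mul_le_mul_of_nonneg_left hKNN hA0
    nlinarith [hfin]
  have t2 : P * ((U.card : ℝ) * c1) ≤ P * (ε * (γ + (r:ℝ) - 1) * (r:ℝ)) / (((r:ℝ) - 1) * (n:ℝ)) := by
    have h := mul_le_mul_of_nonneg_left hfrac hP0.le
    have heq : P * (ε * (γ + (r:ℝ) - 1) * (r:ℝ)) / (((r:ℝ) - 1) * (n:ℝ))
        = P * (ε * (γ + (r:ℝ) - 1) * (r:ℝ) / (((r:ℝ) - 1) * (n:ℝ))) := by ring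
    rw [heq]
    exact h
  have expand : P * (((U.card : ℝ) * c1 + c2 * (2*γ+1)) * f S)
      = (P * ((U.card : ℝ) * c1) + P * (c2 * (2*γ+1))) * f S := by ring
  have hcoefmul : (P * ((U.card : ℝ) * c1) + P * (c2 * (2*γ+1))) * f S
      ≤ ((2*γ + (r:ℝ) - 1) / ((r:ℝ) - 1) * P * (5*γ+2)
          + P * (ε * (γ + (r:ℝ) - 1) * (r:ℝ)) / (((r:ℝ) - 1) * (n:ℝ))) * f S := by
    apply mul_le_mul_of_nonneg_right _ (hnonneg S)
    linarith [t1, t2]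
  rw [hP] at hcoefmul hPΦ hmain
  simp only [hqdef]
  calc f T ≤ f S + (2:ℝ)^(4*γ) * Φ := hmain
    _ ≤ f S + (2:ℝ)^(4*γ) * (((U.card : ℝ) * c1 + c2 * (2*γ+1)) * f S) := by linarith
    _ ≤ ((2 * γ + r - 1) / (r - 1) * (2 : ℝ) ^ (4 * γ) * (5 * γ + 2) + 1
        + (2 : ℝ) ^ (4 * γ) * (ε * (γ + r - 1) * r) / ((r - 1) * n)) * f S := by
        rw [hP] at expand
        rw [expand]
        linarith [hcoefmul]
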